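/- Let (Ω, S) be a minimal aperiodic subshift over a finite alphabet A, V : ℝ^A → ℝ^d a linear map, and u ∈ Ω such that V·W(u) is bounded, where W(u) is the worm of u. Then the map φ defined on the orbit of u by φ(Sⁿu) = V·ab(u_{[0,n)}) extends to a continuous map φ : Ω → ℝ^d. -/

import Mathlib

/-!
Write `F n = V (ab u_{[0,n)})`. Then `F (n + 1) = F n + V (e_{u n})`, so `F m - F n` only depends on
the word `u_{[n,m)}`. In a Hilbert space, if `x = F n` and `y = F m` are at nearly maximal
distance in the bounded set `B = range F`, the parallelogram law forces every `z ∈ B` with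
`z + (y - x) ∈ B` to lie close to `x`; such `z` are the values of `F` at the occurrences of
`u_{[n,m)}`. By minimality and compactness these occurrences have bounded gaps, so if `u` agrees
on a long window around two positions `j` and `k`, there are occurrences near `j` and `k` at the
same offset, and `F j - F k` is the difference of `F` at those occurrences, hence small. Thus
`F` is uniformly continuous along the orbit of `u` and extends to its closure `Ω` by completeness.
-/

/-- Abelianization of `u_{[0,n)}` for a bi-infinite word `u : ℤ → A`, with the
convention `ab(u_{[0,n)}) = -ab(u_{[-n,0)})` for `n < 0`. -/
def abPrefix {A : Type*} [DecidableEq A] (u : ℤ → A) (n : ℤ) : A → ℤ := fun a =>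
  if 0 ≤ n then (((Finset.range n.toNat).filter (fun i : ℕ => u (i : ℤ) = a)).card : ℤ)
  else -((((Finset.range (-n).toNat).filter (fun i : ℕ => u (-((i : ℤ) + 1)) = a)).card : ℤ))

open Bornology Filter Topology Set

section AbPrefix

variable {A : Type*} [DecidableEq A]

lemma abPrefix_natCast (u : ℤ → A) (k : ℕ) (a : A) :
    abPrefix u k a = ∑ i ∈ Finset.range k, if u i = a then 1 else 0 := by
  rw [abPrefix, if_pos k.cast_nonneg, Int.toNat_natCast, Finset.card_filter]
  push_cast
  rfl

lemma abPrefix_neg_natCast (u : ℤ → A) (k : ℕ) (a : A) :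
    abPrefix u (-k) a = -∑ i ∈ Finset.range k, if u (-((i : ℤ) + 1)) = a then 1 else 0 := by
  rcases k.eq_zero_or_pos with rfl | hk
  · simp [abPrefix]
  · rw [abPrefix, if_neg (by omega), neg_neg, Int.toNat_natCast, Finset.card_filter]
    push_cast
    rfl

lemma abPrefix_add_one_natCast (u : ℤ → A) (k : ℕ) (a : A) :
    abPrefix u (k + 1) a = abPrefix u k a + if u k = a then 1 else 0 := by
  rw [← Nat.cast_succ, abPrefix_natCast, abPrefix_natCast, Finset.sum_range_succ]

lemma abPrefix_add_one (u : ℤ → A) (n : ℤ) (a : A) :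
    abPrefix u (n + 1) a = abPrefix u n a + if u n = a then 1 else 0 := by
  obtain ⟨k, rfl | rfl⟩ := Int.eq_nat_or_neg n
  · exact abPrefix_add_one_natCast u k a
  · rcases k with _ | k
    · simpa using abPrefix_add_one_natCast u 0 a
    · rw [show -((k + 1 : ℕ) : ℤ) + 1 = -(k : ℤ) by push_cast; ring, abPrefix_neg_natCast,
        abPrefix_neg_natCast, Finset.sum_range_succ]
      push_cast
      ring

end AbPrefix

section Window

variable {A G : Type*} [AddCommGroup G] {u : ℤ → A} {F : ℤ → G} {c : A → G}

lemma sub_eq_of_forall_mem_Ico (hF : ∀ n, F (n + 1) = F n + c (u n)) {a b t : ℤ} (hab : a ≤ b)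
    (h : ∀ i ∈ Finset.Ico a b, u (i + t) = u i) : F (b + t) - F (a + t) = F b - F a := by
  induction b, hab using Int.leInduction with
  | base => simp
  | succ b hab ih =>
    rw [add_right_comm, hF, hF, h b (Finset.mem_Ico.2 ⟨hab, lt_add_one b⟩), add_sub_right_comm,
      ih fun i hi => h i (Finset.Ico_subset_Ico_right (by omega) hi), add_sub_right_comm]

end Window

lemma exists_dist_sq_gt {X : Type*} [PseudoMetricSpace X] {B : Set X} (hne : B.Nonempty) {ε : ℝ}
    (hε : 0 < ε) :
    ∃ x ∈ B, ∃ y ∈ B, Metric.diam B ^ 2 - ε ^ 2 < dist x y ^ 2 := by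
  by_contra! h
  obtain ⟨x, hx⟩ := hne
  have h0 : 0 ≤ Metric.diam B ^ 2 - ε ^ 2 := by simpa using h x hx x hx
  have hdiam : Metric.diam B ≤ √(Metric.diam B ^ 2 - ε ^ 2) :=
    Metric.diam_le_of_forall_dist_le (Real.sqrt_nonneg _) fun y hy z hz =>
      Real.le_sqrt_of_sq_le (h y hy z hz)
  have := Real.sq_sqrt h0 ▸ pow_le_pow_left₀ Metric.diam_nonneg hdiam 2
  linarith [pow_pos hε 2]

section Hilbert

variable {E : Type*} [NormedAddCommGroup E] [InnerProductSpace ℝ E]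

lemma dist_lt_of_add_sub_mem {B : Set E} {D ε : ℝ} (hD : ∀ a ∈ B, ∀ b ∈ B, dist a b ≤ D)
    (hε : 0 < ε) {x y z : E} (hx : x ∈ B) (hy : y ∈ B) (hxy : D ^ 2 - ε ^ 2 < dist x y ^ 2)
    (hz : z ∈ B) (hz' : z + (y - x) ∈ B) : dist z x < ε := by
  have hpar := parallelogram_law_with_norm ℝ (z - x) (y - x)
  rw [show z - x + (y - x) = z + (y - x) - x by abel, show z - x - (y - x) = z - y by abel,
    ← dist_eq_norm, ← dist_eq_norm, ← dist_eq_norm, ← dist_eq_norm, dist_comm y x] at hpar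
  have h1 := pow_le_pow_left₀ dist_nonneg (hD _ hz' x hx) 2
  have h2 := pow_le_pow_left₀ dist_nonneg (hD z hz y hy) 2
  exact (pow_lt_pow_iff_left₀ dist_nonneg hε.le two_ne_zero).1 (by nlinarith)

end Hilbert

def IsUniformlyRecurrent {A : Type*} (u : ℤ → A) : Prop :=
  ∀ s : Finset ℤ, ∃ L : ℕ, ∀ q : ℤ, ∃ p ∈ Icc q (q + L), ∀ i ∈ s, u (i + p) = u i

theorem IsUniformlyRecurrent.exists_finset_dist_lt {A E : Type*} [NormedAddCommGroup E]
    [InnerProductSpace ℝ E] {u : ℤ → A} (hu : IsUniformlyRecurrent u) {F : ℤ → E} {c : A → E}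
    (hF : ∀ n, F (n + 1) = F n + c (u n)) (hbdd : IsBounded (range F)) {ε : ℝ} (hε : 0 < ε) :
    ∃ s : Finset ℤ, ∀ j k, (∀ i ∈ s, u (i + j) = u (i + k)) → dist (F j) (F k) < ε := by
  obtain ⟨n, m, hnm, hfar⟩ :
      ∃ n m, n ≤ m ∧ Metric.diam (range F) ^ 2 - (ε / 2) ^ 2 < dist (F n) (F m) ^ 2 := by
    obtain ⟨_, ⟨p, rfl⟩, _, ⟨q, rfl⟩, h⟩ := exists_dist_sq_gt (range_nonempty F) (half_pos hε)
    rcases le_total p q with hpq | hqp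
    · exact ⟨p, q, hpq, h⟩
    · exact ⟨q, p, hqp, by rwa [dist_comm]⟩
  have hocc : ∀ r, (∀ i ∈ Finset.Ico n m, u (i + r) = u i) → dist (F (n + r)) (F n) < ε / 2 := by
    intro r hr
    refine dist_lt_of_add_sub_mem (fun a ha b hb => Metric.dist_le_diam_of_mem hbdd ha hb)
      (half_pos hε) ⟨n, rfl⟩ ⟨m, rfl⟩ hfar ⟨n + r, rfl⟩ ⟨m + r, ?_⟩
    rw [← sub_eq_of_forall_mem_Ico hF hnm hr]
    abel
  obtain ⟨L, hL⟩ := hu (Finset.Ico n m)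
  refine ⟨Finset.Ico 0 (L + (m - n)), fun j k hjk => ?_⟩
  obtain ⟨p, ⟨hp₁, hp₂⟩, hp⟩ := hL (k - n)
  have hp' : ∀ i ∈ Finset.Ico n m, u (i + (p + (j - k))) = u i := by
    intro i hi
    obtain ⟨hi₁, hi₂⟩ := Finset.mem_Ico.1 hi
    rw [← hp i hi, show i + (p + (j - k)) = i + p - k + j by ring,
      hjk _ (Finset.mem_Ico.2 ⟨by omega, by omega⟩), sub_add_cancel]
  have hshift : F (n + p + (j - k)) - F (k + (j - k)) = F (n + p) - F k := by
    refine sub_eq_of_forall_mem_Ico hF (by omega) fun i hi => ?_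
    obtain ⟨hi₁, hi₂⟩ := Finset.mem_Ico.1 hi
    rw [show i + (j - k) = i - k + j by ring, hjk _ (Finset.mem_Ico.2 ⟨by omega, by omega⟩),
      sub_add_cancel]
  rw [add_sub_cancel, sub_eq_sub_iff_sub_eq_sub] at hshift
  calc dist (F j) (F k) = dist (F (n + (p + (j - k)))) (F (n + p)) := by
        rw [dist_eq_norm, dist_eq_norm, ← add_assoc, hshift]
    _ ≤ dist (F (n + (p + (j - k)))) (F n) + dist (F (n + p)) (F n) := dist_triangle_right _ _ _
    _ < ε / 2 + ε / 2 := add_lt_add (hocc _ hp') (hocc _ hp)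
    _ = ε := add_halves ε

theorem exists_continuousOn_comp_eq_of_forall_dist_lt {ι X E : Type*} [TopologicalSpace X]
    [MetricSpace E] [CompleteSpace E] [Nonempty E] {o : ι → X} {f : ι → E} {S : Set X}
    (hoS : ∀ n, o n ∈ S) (hS : S ⊆ closure (range o))
    (hf : ∀ x ∈ S, ∀ ε > 0, ∃ U ∈ 𝓝 x, ∀ j k, o j ∈ U → o k ∈ U → dist (f j) (f k) < ε) :
    ∃ φ : X → E, ContinuousOn φ S ∧ ∀ n, φ (o n) = f n := by
  have hfo : f.FactorsThrough o := fun j k hjk => eq_of_forall_dist_le fun ε hε => by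
    obtain ⟨U, hU, hUf⟩ := hf _ (hoS j) ε hε
    exact (hUf j k (mem_of_mem_nhds hU) (hjk ▸ mem_of_mem_nhds hU)).le
  set g := Function.extend o f fun _ => Classical.arbitrary E
  have hg : ∀ n, g (o n) = f n := hfo.extend_apply _
  have hlim : ∀ x ∈ S, ∃ y, Tendsto g (𝓝[range o] x) (𝓝 y) := by
    intro x hx
    have := mem_closure_iff_nhdsWithin_neBot.1 (hS hx)
    refine CompleteSpace.complete (Metric.cauchy_iff.2 ⟨inferInstance, fun ε hε => ?_⟩)
    obtain ⟨U, hU, hUf⟩ := hf x hx ε hε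
    refine ⟨g '' (range o ∩ U), image_mem_map (inter_mem_nhdsWithin _ hU), ?_⟩
    rintro _ ⟨_, ⟨⟨j, rfl⟩, hj⟩, rfl⟩ _ ⟨_, ⟨⟨k, rfl⟩, hk⟩, rfl⟩
    rw [hg, hg]
    exact hUf j k hj hk
  refine ⟨extendFrom (range o) g, continuousOn_extendFrom hS hlim, fun n => ?_⟩
  obtain ⟨y, hy⟩ := hlim _ (hoS n)
  rw [extendFrom_eq (subset_closure (mem_range_self n)) hy, ← hg]
  exact tendsto_nhds_unique (hy.mono_left (pure_le_nhdsWithin (mem_range_self n)))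
    (tendsto_pure_nhds g _)

lemma shift_mem_of_image_shift_eq {A : Type*} {Ω : Set (ℤ → A)}
    (hinv : (fun x : ℤ → A => fun i => x (i + 1)) '' Ω = Ω) (n : ℤ) {x : ℤ → A} (hx : x ∈ Ω) :
    (fun i => x (i + n)) ∈ Ω := by
  induction n using Int.induction_on with
  | zero => simpa using hx
  | succ k ih =>
    rw [← hinv]
    exact ⟨_, ih, funext fun i => congrArg x (by ring)⟩
  | pred k ih =>
    rw [← hinv] at ih
    obtain ⟨y, hy, hyx⟩ := ih
    convert hy using 1
    funext i
    have h := congrFun hyx (i - 1)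
    dsimp only at h
    rw [sub_add_cancel] at h
    rw [h]
    exact congrArg x (by ring)

section Subshift

variable {A : Type*} [TopologicalSpace A] [DiscreteTopology A]

lemma isOpen_setOf_forall_mem_apply_eq {ι κ : Type*} (s : Finset ι) (g : ι → κ) (w : ι → A) :
    IsOpen {y : κ → A | ∀ i ∈ s, y (g i) = w i} := by
  simp only [ofPred_forall]
  exact isOpen_biInter_finset fun i _ =>
    (isOpen_discrete {w i}).preimage (continuous_apply (A := fun _ : κ => A) (g i))

/-- By compactness, finitely many translates of a cylinder around `u` cover the minimal subshift;
the largest of these translations bounds the return gaps. -/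
theorem isUniformlyRecurrent_of_minimal [Finite A] {Ω : Set (ℤ → A)} (hclosed : IsClosed Ω)
    (hinv : (fun x : ℤ → A => fun i => x (i + 1)) '' Ω = Ω)
    (hmin : ∀ x ∈ Ω, ∀ y ∈ Ω, y ∈ closure {z : ℤ → A | ∃ n : ℤ, z = fun i => x (i + n)})
    {u : ℤ → A} (hu : u ∈ Ω) : IsUniformlyRecurrent u := by
  intro s
  let C : ℤ → Set (ℤ → A) := fun k => {y | ∀ i ∈ s, y (i + k) = u i}
  have hcover : Ω ⊆ ⋃ k, C k := fun y hy => by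
    obtain ⟨_, hz, k, rfl⟩ := mem_closure_iff.1 (hmin y hy u hu) _
      (isOpen_setOf_forall_mem_apply_eq s id u) fun _ _ => rfl
    exact mem_iUnion.2 ⟨k, hz⟩
  obtain ⟨T, hT⟩ := hclosed.isCompact.elim_finite_subcover C
    (fun k => isOpen_setOf_forall_mem_apply_eq s (· + k) u) hcover
  let K := T.sup Int.natAbs
  refine ⟨2 * K, fun q => ?_⟩
  obtain ⟨k, hkT, hk⟩ := mem_iUnion₂.1 (hT (shift_mem_of_image_shift_eq hinv (q + K) hu))
  have hkK : k.natAbs ≤ K := Finset.le_sup hkT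
  refine ⟨k + (q + K), ⟨by omega, by omega⟩, fun i hi => ?_⟩
  rw [← add_assoc]
  exact hk i hi

end Subshift

theorem exists_continuousOn_shift_eq_of_isBounded_range {A E : Type*} [Finite A]
    [TopologicalSpace A] [DiscreteTopology A] [NormedAddCommGroup E] [InnerProductSpace ℝ E]
    [CompleteSpace E] {Ω : Set (ℤ → A)} (hclosed : IsClosed Ω)
    (hinv : (fun x : ℤ → A => fun i => x (i + 1)) '' Ω = Ω)
    (hmin : ∀ x ∈ Ω, ∀ y ∈ Ω, y ∈ closure {z : ℤ → A | ∃ n : ℤ, z = fun i => x (i + n)})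
    {u : ℤ → A} (hu : u ∈ Ω) {F : ℤ → E} {c : A → E} (hF : ∀ n, F (n + 1) = F n + c (u n))
    (hbdd : IsBounded (range F)) :
    ∃ φ : (ℤ → A) → E, ContinuousOn φ Ω ∧ ∀ n, φ (fun i => u (i + n)) = F n := by
  refine exists_continuousOn_comp_eq_of_forall_dist_lt
    (fun n => shift_mem_of_image_shift_eq hinv n hu) (fun x hx => ?_) fun x _ ε hε => ?_
  · simpa only [range, eq_comm] using hmin u hu x hx
  obtain ⟨s, hs⟩ :=
    (isUniformlyRecurrent_of_minimal hclosed hinv hmin hu).exists_finset_dist_lt hF hbdd hε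
  refine ⟨_, (isOpen_setOf_forall_mem_apply_eq s id x).mem_nhds fun _ _ => rfl,
    fun j k hj hk => hs j k fun i hi => ?_⟩
  exact (hj i hi).trans (hk i hi).symm

theorem stmt_15_general {A : Type*} [Fintype A] [DecidableEq A]
    [TopologicalSpace A] [DiscreteTopology A] {d : ℕ}
    (Ω : Set (ℤ → A)) (hclosed : IsClosed Ω)
    (hinv : (fun x : ℤ → A => fun i => x (i + 1)) '' Ω = Ω)
    (hmin : ∀ x ∈ Ω, ∀ y ∈ Ω, y ∈ closure {z : ℤ → A | ∃ n : ℤ, z = fun i => x (i + n)})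
    (V : (A → ℝ) →ₗ[ℝ] (Fin d → ℝ)) (u : ℤ → A) (hu : u ∈ Ω)
    (hbdd : Bornology.IsBounded
      (Set.range fun n : ℤ => V fun a => (abPrefix u n a : ℝ))) :
    ∃ φ : (ℤ → A) → (Fin d → ℝ), ContinuousOn φ Ω ∧
      ∀ n : ℤ, φ (fun i => u (i + n)) = V fun a => (abPrefix u n a : ℝ) := by
  let e := EuclideanSpace.equiv (Fin d) ℝ
  let F : ℤ → EuclideanSpace ℝ (Fin d) := fun n => e.symm (V fun a => (abPrefix u n a : ℝ))
  have hF : ∀ n, F (n + 1) = F n + e.symm (V fun a => if u n = a then 1 else 0) := by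
    intro n
    simp only [F, ← map_add, abPrefix_add_one]
    congr 2
    ext a
    split_ifs <;> simp [*]
  have hFbdd : IsBounded (range F) := by
    rw [show F = e.symm ∘ fun n => V fun a => (abPrefix u n a : ℝ) from rfl, range_comp]
    exact e.symm.lipschitz.isBounded_image hbdd
  obtain ⟨φ, hφ, hφu⟩ := exists_continuousOn_shift_eq_of_isBounded_range hclosed hinv hmin hu
    (c := fun b => e.symm (V fun a => if b = a then 1 else 0)) hF hFbdd
  exact ⟨e ∘ φ, e.continuous.comp_continuousOn hφ, fun n => by simp [hφu, F]⟩

theorem stmt_15 {A : Type*} [Fintype A] [DecidableEq A]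
    [TopologicalSpace A] [DiscreteTopology A] {d : ℕ}
    (Ω : Set (ℤ → A)) (hclosed : IsClosed Ω)
    (hinv : (fun x : ℤ → A => fun i => x (i + 1)) '' Ω = Ω)
    (hmin : ∀ x ∈ Ω, ∀ y ∈ Ω, y ∈ closure {z : ℤ → A | ∃ n : ℤ, z = fun i => x (i + n)})
    (haper : ∀ x ∈ Ω, ∀ n : ℤ, (fun i => x (i + n)) = x → n = 0)
    (V : (A → ℝ) →ₗ[ℝ] (Fin d → ℝ)) (u : ℤ → A) (hu : u ∈ Ω)
    (hbdd : Bornology.IsBounded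
      (Set.range fun n : ℤ => V fun a => (abPrefix u n a : ℝ))) :
    ∃ φ : (ℤ → A) → (Fin d → ℝ), ContinuousOn φ Ω ∧
      ∀ n : ℤ, φ (fun i => u (i + n)) = V fun a => (abPrefix u n a : ℝ) :=
  stmt_15_general Ω hclosed hinv hmin V u hu hbdd
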